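/- ∑_{k=0}^∞ (3/2)_k^2 (−1/2)_k / [(k!)^2 · (k+1)!] · (2k+1)/(−8)^k = 8√2/(3π). -/

import Mathlib

/-- The Pochhammer symbol `(x)ₖ = x (x+1) ⋯ (x+k-1)`, with `(x)₀ = 1`. -/
noncomputable def poch (x : ℝ) (k : ℕ) : ℝ :=
  ∏ i ∈ Finset.range k, (x + i)

/-!
The summand equals `(4/3) (6k+1) ramanujanTerm k + (u (k+1) - u k)` with
`u k = -(64/3) k² halfPochTerm k`, and `u 0 = 0`; so the series is `4/3` times Ramanujan's series
`∑ (6k+1) (1/2)ₖ³ / k!³ · (-1/8)ᵏ = 2√2/π`.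

That series comes from the WZ method. `wzF n k = (6k+1) (1/2)ₖ³ (-n)ₖ / (k!³ (2n+3/2)ₖ 4ᵏ)` has a
certificate `wzG` with `16(n+1)² F (n+1) k - (4n+3)(4n+5) F n k = G n (k+1) - G n k`, so the
terminating sums satisfy `∑ₖ F n k = ∏_{j<n} (1 - (1/4)²/(j+1)²)`, which tends to
`sin(π/4)/(π/4) = 2√2/π` by Euler's product. On the other hand `F n k → (6k+1) ramanujanTerm k`
as `n → ∞`, dominated by `(6k+1)/4ᵏ`, so the limits of the sums agree (Tannery).
-/

open Finset Filter Topology Real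
open scoped Nat

lemma poch_succ (x : ℝ) (k : ℕ) : poch x (k + 1) = poch x k * (x + k) :=
  prod_range_succ _ _

lemma mul_poch_add_one (x : ℝ) (k : ℕ) : x * poch (x + 1) k = poch x k * (x + k) := by
  rw [← poch_succ, poch, poch, prod_range_succ', mul_comm]
  push_cast
  simp only [add_zero, add_assoc, add_comm (1 : ℝ)]

lemma poch_pos {x : ℝ} (hx : 0 < x) (k : ℕ) : 0 < poch x k :=
  prod_pos fun _ _ => by positivity

lemma poch_neg_natCast_of_lt {m k : ℕ} (h : m < k) : poch (-m) k = 0 :=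
  prod_eq_zero (mem_range.2 h) (neg_add_cancel _)

lemma abs_poch_div_factorial_le_one {x : ℝ} (hx : |x| ≤ 1) (k : ℕ) :
    |poch x k / k !| ≤ 1 := by
  rw [abs_div, Nat.abs_cast]
  refine div_le_one_of_le₀ ?_ (Nat.cast_nonneg _)
  rw [poch, abs_prod, ← prod_range_add_one_eq_factorial, Nat.cast_prod]
  refine prod_le_prod (fun _ _ => abs_nonneg _) fun i _ => ?_
  push_cast
  linarith [abs_add_le x i, abs_of_nonneg (Nat.cast_nonneg (α := ℝ) i)]

lemma Summable.hasSum_succ_sub {G : Type*} [AddCommGroup G] [TopologicalSpace G]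
    [IsTopologicalAddGroup G] {u : ℕ → G} (hu : Summable u) :
    HasSum (fun k => u (k + 1) - u k) (-u 0) := by
  have h := ((hasSum_nat_add_iff' 1).2 hu.hasSum).sub hu.hasSum
  simpa using h

noncomputable def wzKernel (x y : ℝ) (k : ℕ) : ℝ :=
  poch (1/2) k ^ 3 / ((k ! : ℝ) ^ 3 * 4 ^ k) * (poch x k / poch y k)

lemma wzKernel_add_one {x : ℝ} (hx : x ≠ 0) (y : ℝ) (k : ℕ) :
    wzKernel (x + 1) y k = (x + k) / x * wzKernel x y k := by
  have h : poch (x + 1) k = (x + k) / x * poch x k := by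
    rw [div_mul_eq_mul_div, eq_div_iff hx, mul_comm, mul_poch_add_one, mul_comm]
  rw [wzKernel, wzKernel, h]
  ring

lemma wzKernel_add_two {y : ℝ} (hy : 0 < y) (x : ℝ) (k : ℕ) :
    wzKernel x (y + 2) k = y * (y + 1) / ((y + k) * (y + k + 1)) * wzKernel x y k := by
  have h₁ := mul_poch_add_one y k
  have h₂ := mul_poch_add_one (y + 1) k
  rw [add_assoc, one_add_one_eq_two] at h₂
  have hp := poch_pos hy k
  have hp₂ := poch_pos (by positivity : 0 < y + 2) k
  simp only [wzKernel]
  field_simp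
  linear_combination -poch (1/2) k ^ 3 * poch x k * ((y + k + 1) * h₁ + y * h₂)

lemma wzKernel_succ {y : ℝ} (hy : 0 < y) (x : ℝ) (k : ℕ) :
    wzKernel x y (k + 1) =
      (1/2 + k) ^ 3 * (x + k) / (4 * (k + 1) ^ 3 * (y + k)) * wzKernel x y k := by
  have hp := poch_pos hy k
  simp only [wzKernel, poch_succ, Nat.factorial_succ, pow_succ]
  push_cast
  field_simp

noncomputable def wzF (n k : ℕ) : ℝ := (6 * k + 1) * wzKernel (-n) (2 * n + 3/2) k

noncomputable def wzG (n k : ℕ) : ℝ :=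
  -16 * (4 * n + 3) * (4 * n + 5) * k ^ 3 / ((n + 1) * (4 * n + 2 * k + 3)) *
    wzKernel (-(n + 1)) (2 * n + 3/2) k

lemma wzF_wzG_pair (n k : ℕ) :
    16 * ((n : ℝ) + 1) ^ 2 * wzF (n + 1) k - (4 * n + 3) * (4 * n + 5) * wzF n k =
      wzG n (k + 1) - wzG n k := by
  have hy : (0 : ℝ) < 2 * n + 3/2 := by positivity
  have h₁ := wzKernel_add_one (x := -((n : ℝ) + 1)) (neg_ne_zero.2 n.cast_add_one_ne_zero)
    (2 * n + 3/2) k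
  rw [show -((n : ℝ) + 1) + 1 = -n by ring] at h₁
  have h₂ := wzKernel_add_two hy (-((n : ℝ) + 1)) k
  have h₃ := wzKernel_succ hy (-((n : ℝ) + 1)) k
  simp only [wzF, wzG]
  push_cast
  rw [show 2 * ((n : ℝ) + 1) + 3/2 = 2 * n + 3/2 + 2 by ring, h₁, h₂, h₃]
  field_simp
  ring

lemma wzF_of_lt {n k : ℕ} (h : n < k) : wzF n k = 0 := by
  simp [wzF, wzKernel, poch_neg_natCast_of_lt h]

lemma sum_range_wzF_succ (n : ℕ) :
    16 * ((n : ℝ) + 1) ^ 2 * ∑ k ∈ range (n + 2), wzF (n + 1) k =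
      (4 * n + 3) * (4 * n + 5) * ∑ k ∈ range (n + 1), wzF n k := by
  have hG₀ : wzG n 0 = 0 := by simp [wzG]
  have hG : wzG n (n + 2) = 0 := by
    have := poch_neg_natCast_of_lt (n + 1).lt_succ_self
    push_cast at this
    rw [wzG, wzKernel, this]
    simp
  have h := sum_range_sub (wzG n) (n + 2)
  rw [← sum_congr rfl fun k _ => wzF_wzG_pair n k, sum_sub_distrib, ← mul_sum, ← mul_sum,
    sum_range_succ (wzF n), wzF_of_lt n.lt_succ_self, hG, hG₀] at h
  linarith

lemma sum_range_wzF_eq_prod (n : ℕ) :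
    ∑ k ∈ range (n + 1), wzF n k =
      ∏ j ∈ range n, (1 - (1/4 : ℝ) ^ 2 / ((j : ℝ) + 1) ^ 2) := by
  induction n with
  | zero => simp [wzF, wzKernel, poch]
  | succ n ih =>
    have h := sum_range_wzF_succ n
    rw [prod_range_succ, ← ih]
    field_simp
    linear_combination h

lemma tendsto_prod_one_sub_quarter_sq :
    Tendsto (fun n : ℕ => ∏ j ∈ range n, (1 - (1/4 : ℝ) ^ 2 / ((j : ℝ) + 1) ^ 2)) atTop
      (𝓝 (2 * √2 / π)) := by
  have h := (tendsto_euler_sin_prod (1/4)).const_mul (4 / π)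
  rw [show π * (1/4) = π / 4 by ring, sin_pi_div_four] at h
  convert h using 2
  · field_simp
  · ring

lemma poch_neg_div_poch_eq_prod (n k : ℕ) :
    poch (-n) k / poch (2 * n + 3/2) k = ∏ i ∈ range k, (-n + i : ℝ) / (2 * n + 3/2 + i) :=
  (prod_div_distrib ..).symm

lemma tendsto_poch_neg_div_poch (k : ℕ) :
    Tendsto (fun n : ℕ => poch (-n) k / poch (2 * n + 3/2) k) atTop (𝓝 ((-1/2) ^ k)) := by
  simp_rw [poch_neg_div_poch_eq_prod]
  rw [show (-1/2 : ℝ) ^ k = ∏ _i ∈ range k, (-1/2 : ℝ) by rw [prod_const, card_range]]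
  refine tendsto_finsetProd _ fun i _ => ?_
  have hden : Tendsto (fun n : ℕ => 2 * (n : ℝ) + 3/2 + i) atTop atTop :=
    tendsto_atTop_add_const_right _ _ <| tendsto_atTop_add_const_right _ _ <|
      tendsto_natCast_atTop_atTop.const_mul_atTop two_pos
  have h := (tendsto_const_nhds (x := (3/4 + 3/2 * i : ℝ))).div_atTop hden |>.const_add (-1/2)
  rw [add_zero] at h
  refine h.congr fun n => ?_
  field_simp
  ring

lemma abs_poch_neg_div_poch_le_one (n k : ℕ) :
    |poch (-n) k / poch (2 * n + 3/2) k| ≤ 1 := by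
  rw [poch_neg_div_poch_eq_prod, abs_prod]
  refine prod_le_one (fun _ _ => abs_nonneg _) fun i _ => ?_
  rw [abs_div, div_le_one (by positivity), abs_le, abs_of_pos (by positivity)]
  constructor <;> linarith [(n.cast_nonneg : (0 : ℝ) ≤ n), (i.cast_nonneg : (0 : ℝ) ≤ i)]

noncomputable def ramanujanTerm (k : ℕ) : ℝ :=
  poch (1/2) k ^ 3 / (k ! : ℝ) ^ 3 * (-1/8) ^ k

lemma tendsto_wzF (k : ℕ) :
    Tendsto (fun n => wzF n k) atTop (𝓝 ((6 * k + 1) * ramanujanTerm k)) := by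
  have h := (tendsto_poch_neg_div_poch k).const_mul
    ((6 * k + 1) * (poch (1/2) k ^ 3 / ((k ! : ℝ) ^ 3 * 4 ^ k)))
  rw [ramanujanTerm, show (-1/8 : ℝ) = -1/2 / 4 by norm_num, div_pow]
  convert h using 2
  · rw [wzF, wzKernel, mul_assoc]
  · ring

lemma abs_wzF_le (n k : ℕ) : |wzF n k| ≤ (6 * k + 1) * (1/4) ^ k := by
  have hc : |poch (1/2) k ^ 3 / ((k ! : ℝ) ^ 3 * 4 ^ k)| ≤ (1/4) ^ k := by
    rw [show poch (1/2) k ^ 3 / ((k ! : ℝ) ^ 3 * 4 ^ k) = (poch (1/2) k / k !) ^ 3 * (1/4) ^ k by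
      rw [one_div_pow]; field_simp]
    rw [abs_mul, abs_pow, abs_of_pos (by positivity : (0 : ℝ) < (1/4) ^ k)]
    exact mul_le_of_le_one_left (by positivity)
      (pow_le_one₀ (abs_nonneg _) (abs_poch_div_factorial_le_one (by norm_num) k))
  rw [wzF, wzKernel, abs_mul, abs_mul, abs_of_nonneg (by positivity : (0 : ℝ) ≤ 6 * k + 1)]
  gcongr
  exact mul_le_of_le_one_right (abs_nonneg _) (abs_poch_neg_div_poch_le_one n k) |>.trans hc

theorem hasSum_ramanujan :
    HasSum (fun k : ℕ => (6 * k + 1) * ramanujanTerm k) (2 * √2 / π) := by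
  have hg : Summable fun k : ℕ => (6 * (k : ℝ) + 1) * (1/4) ^ k := by
    have hr : ‖(1/4 : ℝ)‖ < 1 := by norm_num
    refine (((summable_pow_mul_geometric_of_norm_lt_one 1 hr).mul_left 6).add
      (summable_geometric_of_norm_lt_one hr)).congr fun k => ?_
    ring
  have hbound : ∀ᶠ n in atTop, ∀ k, ‖wzF n k‖ ≤ (6 * k + 1) * (1/4) ^ k :=
    Eventually.of_forall abs_wzF_le
  have hsum := hg.of_norm_bounded fun k =>
    le_of_tendsto (tendsto_wzF k).norm (hbound.mono fun n h => h k)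
  have hpartial (n : ℕ) :
      ∑' k, wzF n k = ∏ j ∈ range n, (1 - (1/4 : ℝ) ^ 2 / ((j : ℝ) + 1) ^ 2) :=
    (tsum_eq_sum fun k hk => wzF_of_lt (by simpa using hk)).trans (sum_range_wzF_eq_prod n)
  have hlim := (tendsto_tsum_of_dominated_convergence hg tendsto_wzF hbound).congr hpartial
  rw [← tendsto_nhds_unique hlim tendsto_prod_one_sub_quarter_sq]
  exact hsum.hasSum

noncomputable def halfPochTerm (k : ℕ) : ℝ :=
  poch (1/2) k ^ 2 * poch (-(1/2)) k / (k ! : ℝ) ^ 3 * (-1/8) ^ k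

lemma summand_eq_halfPochTerm (k : ℕ) :
    (poch (3/2) k ^ 2 * poch (-(1/2)) k) / ((k ! : ℝ) ^ 2 * ((k + 1)! : ℝ)) *
      ((2 * (k : ℝ) + 1) / (-8 : ℝ) ^ k) = (2 * k + 1) ^ 3 / (k + 1) * halfPochTerm k := by
  have h := mul_poch_add_one (1/2) k
  rw [show (1/2 : ℝ) + 1 = 3/2 by norm_num] at h
  have h8 : (-8 : ℝ) ^ k * (-1/8) ^ k = 1 := by rw [← mul_pow]; norm_num
  rw [halfPochTerm, Nat.factorial_succ, show poch (3/2) k = (2 * k + 1) * poch (1/2) k by linarith]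
  push_cast
  field_simp
  linear_combination -poch (1/2) k ^ 2 * poch (-(1/2)) k * h8

lemma ramanujanTerm_eq_halfPochTerm (k : ℕ) :
    ramanujanTerm k = -(2 * k - 1) * halfPochTerm k := by
  have h := mul_poch_add_one (-(1/2)) k
  rw [show -(1/2 : ℝ) + 1 = 1/2 by norm_num] at h
  rw [ramanujanTerm, halfPochTerm,
    show poch (1/2) k = -(2 * k - 1) * poch (-(1/2)) k by linarith]
  ring

lemma halfPochTerm_succ (k : ℕ) :
    halfPochTerm (k + 1) =
      -((2 * k + 1) ^ 2 * (2 * k - 1)) / (64 * (k + 1) ^ 3) * halfPochTerm k := by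
  simp only [halfPochTerm, poch_succ, Nat.factorial_succ, pow_succ]
  push_cast
  field_simp
  ring

lemma abs_halfPochTerm_le (k : ℕ) : |halfPochTerm k| ≤ (1/8) ^ k := by
  have h₁ := abs_poch_div_factorial_le_one (x := 1/2) (by norm_num) k
  have h₂ := abs_poch_div_factorial_le_one (x := -(1/2)) (by norm_num) k
  calc |halfPochTerm k|
      = |poch (1/2) k / k !| ^ 2 * |poch (-(1/2)) k / k !| * (1/8) ^ k := by
        rw [show halfPochTerm k =
            (poch (1/2) k / k !) ^ 2 * (poch (-(1/2)) k / k !) * (-1/8) ^ k by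
          rw [halfPochTerm]; ring]
        rw [abs_mul, abs_mul, abs_pow, abs_pow, show |(-1/8 : ℝ)| = 1/8 by norm_num]
    _ ≤ 1 ^ 2 * 1 * (1/8) ^ k := by gcongr
    _ = (1/8) ^ k := by ring

lemma summable_sq_mul_halfPochTerm : Summable fun k : ℕ => (k : ℝ) ^ 2 * halfPochTerm k := by
  refine (summable_pow_mul_geometric_of_norm_lt_one 2 (by norm_num : ‖(1/8 : ℝ)‖ < 1))
    |>.of_norm_bounded fun k => ?_
  rw [norm_mul, norm_pow, Real.norm_natCast]
  exact mul_le_mul_of_nonneg_left (abs_halfPochTerm_le k) (by positivity)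

lemma summand_eq_telescoping (k : ℕ) :
    (poch (3/2) k ^ 2 * poch (-(1/2)) k) / ((k ! : ℝ) ^ 2 * ((k + 1)! : ℝ)) *
      ((2 * (k : ℝ) + 1) / (-8 : ℝ) ^ k) =
    4/3 * ((6 * k + 1) * ramanujanTerm k) +
      (-(64/3) * (((k + 1 : ℕ) : ℝ) ^ 2 * halfPochTerm (k + 1)) -
        -(64/3) * ((k : ℝ) ^ 2 * halfPochTerm k)) := by
  rw [summand_eq_halfPochTerm, ramanujanTerm_eq_halfPochTerm, halfPochTerm_succ]
  push_cast
  field_simp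
  ring

theorem example_thm4_p0q0 :
    ∑' k : ℕ, (poch (3/2) k ^ 2 * poch (-(1/2)) k) / ((k.factorial : ℝ) ^ 2 * ((k + 1).factorial : ℝ)) * ((2*(k : ℝ) + 1) / (-8 : ℝ) ^ k) = 8 * Real.sqrt 2 / (3 * Real.pi) := by
  have h := (hasSum_ramanujan.mul_left (4/3)).add
    (summable_sq_mul_halfPochTerm.mul_left (-(64/3))).hasSum_succ_sub
  rw [tsum_congr summand_eq_telescoping, h.tsum_eq]
  simp only [Nat.cast_zero]
  ring
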